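/- arXiv:2508.20005 — 4 statements merged into one kernel-verified Lean document; each statement's English description precedes it below -/
import Mathlib

section
/- Let (Γ_n) be a scale of an infinite residually finite group G and X = G_{(Γ_n)} the associated odometer. A homeomorphism f of X commutes with the left multiplication action of G (i.e., f(τ(g)x) = τ(g)f(x) for all g ∈ G, x ∈ X) if and only if there exists a ∈ X such that f(x) = xa^{-1} for all x ∈ X. Consequently, the automorphism group Aut(X,G)_L of the left odometer is isomorphic as a group to X itself. -/
open scoped Pointwise

noncomputable section
namespace OdoPaper


variable {G : Type*} [Group G]

/-- Each finite quotient carries the discrete topology. -/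
instance quotTop (Γ : Subgroup G) : TopologicalSpace (G ⧸ Γ) := ⊥
instance quotDisc (Γ : Subgroup G) : DiscreteTopology (G ⧸ Γ) := ⟨rfl⟩

/-- The natural projection between coset spaces of nested subgroups. -/
def projOfLE {H K : Subgroup G} (h : H ≤ K) : G ⧸ H → G ⧸ K :=
  Quotient.map' id fun a b hab => by
    rw [QuotientGroup.leftRel_apply] at hab ⊢
    exact h hab

/-- The odometer space for a (not necessarily normal) decreasing sequence of subgroups. -/
abbrev OdoSp (Γ : ℕ → Subgroup G) (hdec : ∀ n, Γ (n + 1) ≤ Γ n) : Type _ :=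
  {x : ∀ n, G ⧸ Γ n // ∀ n, projOfLE (hdec n) (x (n + 1)) = x n}

/-- The bonding homomorphisms for a decreasing sequence of normal subgroups. -/
def odoMap (Γ : ℕ → Subgroup G) [∀ n, (Γ n).Normal] (hdec : ∀ n, Γ (n + 1) ≤ Γ n) (n : ℕ) :
    G ⧸ Γ (n + 1) →* G ⧸ Γ n :=
  QuotientGroup.map _ _ (MonoidHom.id G) (hdec n)

/-- The odometer associated to a decreasing sequence of normal subgroups, as a subgroup of
the product of the finite quotients. -/
def Odo (Γ : ℕ → Subgroup G) [∀ n, (Γ n).Normal] (hdec : ∀ n, Γ (n + 1) ≤ Γ n) :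
    Subgroup (∀ n, G ⧸ Γ n) where
  carrier := {x | ∀ n, odoMap Γ hdec n (x (n + 1)) = x n}
  one_mem' := fun n => map_one _
  mul_mem' := fun {a b} ha hb n => by
    simp only [Pi.mul_apply, map_mul, ha n, hb n]
  inv_mem' := fun {a} ha n => by
    simp only [Pi.inv_apply, map_inv, ha n]

/-- The canonical homomorphism from `G` to its odometer. -/
def tau (Γ : ℕ → Subgroup G) [∀ n, (Γ n).Normal] (hdec : ∀ n, Γ (n + 1) ≤ Γ n) :
    G →* Odo Γ hdec where
  toFun g := ⟨fun n => QuotientGroup.mk g, fun n => rfl⟩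
  map_one' := rfl
  map_mul' g₁ g₂ := rfl

/-- Cylinder set of level `n` through the coset `a`. -/
def cyl (Γ : ℕ → Subgroup G) [∀ n, (Γ n).Normal] (hdec : ∀ n, Γ (n + 1) ≤ Γ n) (n : ℕ)
    (a : G ⧸ Γ n) : Set (Odo Γ hdec) :=
  {x | (x : ∀ k, G ⧸ Γ k) n = a}

/-- The metric on the odometer: `d(x,y) = 2^{-min{n : xₙ ≠ yₙ}}`. -/
def odoDist {Γ : ℕ → Subgroup G} [∀ n, (Γ n).Normal] {hdec : ∀ n, Γ (n + 1) ≤ Γ n}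
    (x y : Odo Γ hdec) : ℝ :=
  letI := Classical.dec (x = y)
  if x = y then 0
  else (1 / 2 : ℝ) ^ sInf {n : ℕ | (x : ∀ k, G ⧸ Γ k) n ≠ (y : ∀ k, G ⧸ Γ k) n}



/-- The group of self-homeomorphisms of a space, with `(f * g) x = f (g x)`. -/
instance homeoGroup (X : Type*) [TopologicalSpace X] : Group (X ≃ₜ X) where
  mul f g := g.trans f
  one := Homeomorph.refl X
  inv := Homeomorph.symm
  mul_assoc _ _ _ := Homeomorph.ext fun _ => rfl
  one_mul _ := Homeomorph.ext fun _ => rfl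
  mul_one _ := Homeomorph.ext fun _ => rfl
  inv_mul_cancel f := Homeomorph.ext fun x => f.symm_apply_apply x

theorem homeo_mul_apply {X : Type*} [TopologicalSpace X] (f g : X ≃ₜ X) (x : X) :
    (f * g) x = f (g x) := rfl

theorem homeo_inv_apply {X : Type*} [TopologicalSpace X] (f : X ≃ₜ X) (x : X) :
    f⁻¹ x = f.symm x := rfl

section Full

variable (X : Type*) [Group X] [TopologicalSpace X]

/-- Membership in the topological full group of the right translation action of `X`
on itself: on each piece of a finite clopen partition, `f` is a right translation. -/
def InFullR (f : X ≃ₜ X) : Prop :=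
  ∃ ξ : X → X, IsLocallyConstant ξ ∧ (Set.range ξ).Finite ∧ ∀ x, f x = x * (ξ x)⁻¹

/-- Membership in the topological full group of the left translation action. -/
def InFullL (f : X ≃ₜ X) : Prop :=
  ∃ ξ : X → X, IsLocallyConstant ξ ∧ (Set.range ξ).Finite ∧ ∀ x, f x = ξ x * x

/-- The topological full group `[[X]]_R` of the right translation action. -/
def TFGR : Subgroup (X ≃ₜ X) where
  carrier := {f | InFullR X f}
  one_mem' := ⟨fun _ => 1, IsLocallyConstant.const 1,
    (Set.finite_singleton 1).subset (Set.range_subset_iff.2 fun _ => rfl),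
    fun x => by simp [homeo_mul_apply]⟩
  mul_mem' := by
    rintro f g ⟨ξf, hf1, hf2, hf3⟩ ⟨ξg, hg1, hg2, hg3⟩
    refine ⟨fun x => ξf (g x) * ξg x,
      (hf1.comp_continuous g.continuous).mul hg1,
      (hf2.mul hg2).subset ?_, fun x => ?_⟩
    · rintro y ⟨x, rfl⟩
      exact Set.mul_mem_mul ⟨g x, rfl⟩ ⟨x, rfl⟩
    · show f (g x) = x * (ξf (g x) * ξg x)⁻¹
      rw [mul_inv_rev, ← mul_assoc, ← hg3 x, ← hf3 (g x)]
  inv_mem' := by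
    rintro f ⟨ξ, h1, h2, h3⟩
    refine ⟨fun x => (ξ (f.symm x))⁻¹,
      (h1.comp_continuous f.symm.continuous).inv, (h2.inv).subset ?_, fun x => ?_⟩
    · rintro y ⟨x, rfl⟩
      exact Set.inv_mem_inv.2 ⟨f.symm x, rfl⟩
    · have h := h3 (f.symm x)
      rw [f.apply_symm_apply] at h
      show f.symm x = x * ((ξ (f.symm x))⁻¹)⁻¹
      rw [inv_inv]
      exact (eq_mul_inv_iff_mul_eq.mp h).symm

/-- The topological full group `[[X]]_L` of the left translation action. -/
def TFGL : Subgroup (X ≃ₜ X) where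
  carrier := {f | InFullL X f}
  one_mem' := ⟨fun _ => 1, IsLocallyConstant.const 1,
    (Set.finite_singleton 1).subset (Set.range_subset_iff.2 fun _ => rfl),
    fun x => by simp⟩
  mul_mem' := by
    rintro f g ⟨ξf, hf1, hf2, hf3⟩ ⟨ξg, hg1, hg2, hg3⟩
    refine ⟨fun x => ξf (g x) * ξg x,
      (hf1.comp_continuous g.continuous).mul hg1,
      (hf2.mul hg2).subset ?_, fun x => ?_⟩
    · rintro y ⟨x, rfl⟩
      exact Set.mul_mem_mul ⟨g x, rfl⟩ ⟨x, rfl⟩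
    · show f (g x) = ξf (g x) * ξg x * x
      rw [mul_assoc, ← hg3 x, ← hf3 (g x)]
  inv_mem' := by
    rintro f ⟨ξ, h1, h2, h3⟩
    refine ⟨fun x => (ξ (f.symm x))⁻¹,
      (h1.comp_continuous f.symm.continuous).inv, (h2.inv).subset ?_, fun x => ?_⟩
    · rintro y ⟨x, rfl⟩
      exact Set.inv_mem_inv.2 ⟨f.symm x, rfl⟩
    · have h := h3 (f.symm x)
      rw [f.apply_symm_apply] at h
      show f.symm x = (ξ (f.symm x))⁻¹ * x
      exact eq_inv_mul_iff_mul_eq.mpr h.symm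

/-- `f` commutes with left translation by every element of `S`. -/
def IsAutLOn (S : Set X) (f : X ≃ₜ X) : Prop :=
  ∀ s ∈ S, ∀ x, f (s * x) = s * f x

theorem IsAutLOn.one (S : Set X) : IsAutLOn X S 1 := fun _ _ _ => rfl

theorem IsAutLOn.mul {S T : Set X} {f g : X ≃ₜ X} (hf : IsAutLOn X S f)
    (hg : IsAutLOn X T g) : IsAutLOn X (S ∩ T) (f * g) := fun s hs x => by
  rw [homeo_mul_apply, hg s hs.2, hf s hs.1, homeo_mul_apply]

theorem IsAutLOn.inv {S : Set X} {f : X ≃ₜ X} (hf : IsAutLOn X S f) :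
    IsAutLOn X S f⁻¹ := fun s hs x => by
  rw [homeo_inv_apply]
  have h := hf s hs (f.symm x)
  rw [f.apply_symm_apply] at h
  rw [← h, f.symm_apply_apply]
  rfl

/-- The group of automorphisms of the left translation action of `S ⊆ X` on `X`. -/
def AutLgrp (S : Set X) : Subgroup (X ≃ₜ X) where
  carrier := {f | IsAutLOn X S f}
  one_mem' := IsAutLOn.one X S
  mul_mem' := fun {f g} hf hg => by
    have := IsAutLOn.mul X (S := S) (T := S) hf hg
    simpa using this
  inv_mem' := fun {f} hf => IsAutLOn.inv X hf

end Full



section Stab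
variable (X : Type*) [Group X] [TopologicalSpace X]

/-- A (finitely additive) invariant mean: the classical definition of amenability for
(discrete) groups. -/
def IsAmenable (Γ : Type*) [Group Γ] : Prop :=
  ∃ m : Set Γ → ℝ, (∀ A, 0 ≤ m A) ∧ m Set.univ = 1 ∧
    (∀ A B, Disjoint A B → m (A ∪ B) = m A + m B) ∧
    ∀ (g : Γ) (A), m ((g * ·) '' A) = m A

/-- `C` is a minimal component for the left translation action of the subset `T ⊆ X`. -/
def IsMinCompL (T : Set X) (C : Set X) : Prop :=
  C.Nonempty ∧ IsClosed C ∧ (∀ t ∈ T, ∀ x ∈ C, t * x ∈ C) ∧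
    ∀ x ∈ C, C ⊆ closure ((· * x) '' T)

/-- The subgroup `[[X]]_{U,L}` of homeomorphisms acting as a left translation on each
left coset of `U`. -/
def fullUL (U : Subgroup X) : Subgroup (X ≃ₜ X) where
  carrier := {f | ∀ a : X, ∃ ξ : X, ∀ x : X,
    (QuotientGroup.mk x : X ⧸ U) = QuotientGroup.mk a → f x = ξ * x}
  one_mem' := fun a => ⟨1, fun x _ => (one_mul x).symm⟩
  mul_mem' := by
    intro f g hf hg a
    obtain ⟨ξg, hξg⟩ := hg a
    obtain ⟨ξf, hξf⟩ := hf (ξg * a)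
    refine ⟨ξf * ξg, fun x hx => ?_⟩
    have hx' : (QuotientGroup.mk (ξg * x) : X ⧸ U) = QuotientGroup.mk (ξg * a) := by
      rw [QuotientGroup.eq] at hx ⊢
      simpa [mul_assoc] using hx
    show f (g x) = ξf * ξg * x
    rw [hξg x hx, hξf (ξg * x) hx', mul_assoc]
  inv_mem' := by
    intro f hf a
    obtain ⟨ξ, hξ⟩ := hf (f.symm a)
    refine ⟨ξ⁻¹, fun x hx => ?_⟩
    have ha : f (f.symm a) = ξ * f.symm a := hξ _ rfl
    rw [f.apply_symm_apply] at ha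
    have hx' : (QuotientGroup.mk (ξ⁻¹ * x) : X ⧸ U) = QuotientGroup.mk (f.symm a) := by
      rw [QuotientGroup.eq] at hx ⊢
      have : f.symm a = ξ⁻¹ * a := eq_inv_mul_iff_mul_eq.mpr ha.symm
      rw [this]
      simpa [mul_assoc] using hx
    have := hξ (ξ⁻¹ * x) hx'
    rw [mul_inv_cancel_left] at this
    show f.symm x = ξ⁻¹ * x
    conv_lhs => rw [← this]
    rw [f.symm_apply_apply]
end Stab

section Full0
variable (X : Type*) [Group X] [TopologicalSpace X]

/-- The subgroup `[[X]]⁰_{U,L}` of elements of the topological full group preserving each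
left coset `aU` and acting on it by left multiplication by an element of `aUa⁻¹`. -/
def full0L (U : Subgroup X) : Subgroup (X ≃ₜ X) where
  carrier := {f | ∀ a : X, ∃ u ∈ U, ∀ x : X,
    (QuotientGroup.mk x : X ⧸ U) = QuotientGroup.mk a → f x = a * u * a⁻¹ * x}
  one_mem' := fun a => ⟨1, U.one_mem, fun x _ => by
    show x = a * 1 * a⁻¹ * x
    simp⟩
  mul_mem' := by
    intro f g hf hg a
    obtain ⟨ug, hugU, hg'⟩ := hg a
    obtain ⟨uf, hufU, hf'⟩ := hf a
    refine ⟨uf * ug, U.mul_mem hufU hugU, fun x hx => ?_⟩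
    have hgx : (QuotientGroup.mk (g x) : X ⧸ U) = QuotientGroup.mk a := by
      rw [hg' x hx]
      rw [QuotientGroup.eq] at hx ⊢
      have h : (a * ug * a⁻¹ * x)⁻¹ * a = x⁻¹ * a * ug⁻¹ := by group
      rw [h]
      exact U.mul_mem hx (U.inv_mem hugU)
    show f (g x) = a * (uf * ug) * a⁻¹ * x
    rw [hf' (g x) hgx, hg' x hx]
    group
  inv_mem' := by
    intro f hf a
    obtain ⟨u, huU, hu⟩ := hf a
    refine ⟨u⁻¹, U.inv_mem huU, fun x hx => ?_⟩
    have hx' : (QuotientGroup.mk (a * u⁻¹ * a⁻¹ * x) : X ⧸ U) = QuotientGroup.mk a := by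
      rw [QuotientGroup.eq] at hx ⊢
      have h : (a * u⁻¹ * a⁻¹ * x)⁻¹ * a = x⁻¹ * a * u := by group
      rw [h]
      exact U.mul_mem hx huU
    have h2 := hu _ hx'
    have h3 : f (a * u⁻¹ * a⁻¹ * x) = x := by rw [h2]; group
    show f.symm x = a * u⁻¹ * a⁻¹ * x
    conv_lhs => rw [← h3]
    rw [f.symm_apply_apply]

end Full0

section StabAut
variable {G : Type*} [Group G]

/-- The stabilized automorphism group of the (left) odometer: homeomorphisms commuting
with the left translation action of some finite-index subgroup of `G`. -/
def stabAut (Γ : ℕ → Subgroup G) [∀ n, (Γ n).Normal] (hdec : ∀ n, Γ (n + 1) ≤ Γ n) :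
    Subgroup (↥(Odo Γ hdec) ≃ₜ ↥(Odo Γ hdec)) where
  carrier := {f | ∃ H : Subgroup G, H.FiniteIndex ∧
    IsAutLOn _ (tau Γ hdec '' (H : Set G)) f}
  one_mem' := ⟨⊤, inferInstance, IsAutLOn.one _ _⟩
  mul_mem' := by
    rintro f g ⟨H₁, h₁, hf⟩ ⟨H₂, h₂, hg⟩
    haveI := h₁; haveI := h₂
    refine ⟨H₁ ⊓ H₂, inferInstance, ?_⟩
    rintro s ⟨γ, hγ, rfl⟩ x
    have hγ' := Subgroup.mem_inf.mp hγ
    rw [homeo_mul_apply, hg _ ⟨γ, hγ'.2, rfl⟩, hf _ ⟨γ, hγ'.1, rfl⟩, homeo_mul_apply]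
  inv_mem' := by
    rintro f ⟨H, h, hf⟩
    exact ⟨H, h, IsAutLOn.inv _ hf⟩

/-- The clopen subgroup `[1]_n` of the odometer (kernel of the projection to level `n`). -/
def levelKer (Γ : ℕ → Subgroup G) [∀ n, (Γ n).Normal] (hdec : ∀ n, Γ (n + 1) ≤ Γ n)
    (n : ℕ) : Subgroup ↥(Odo Γ hdec) :=
  ((Pi.evalMonoidHom (fun k => G ⧸ Γ k) n).comp (Odo Γ hdec).subtype).ker

end StabAut

section Adic

/-- The subgroups `m^n ℤ` of `ℤ`, multiplicatively. -/
def zmSub (m : ℕ) (n : ℕ) : Subgroup (Multiplicative ℤ) :=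
  Subgroup.closure {Multiplicative.ofAdd ((m : ℤ) ^ n)}

theorem zmdec (m : ℕ) : ∀ n, zmSub m (n + 1) ≤ zmSub m n := fun n => by
  rw [zmSub, Subgroup.closure_le]
  intro y hy
  rw [Set.mem_singleton_iff] at hy
  subst hy
  rw [SetLike.mem_coe, zmSub, Subgroup.mem_closure_singleton]
  refine ⟨(m : ℤ), ?_⟩
  rw [← ofAdd_zsmul]
  congr 1
  rw [smul_eq_mul, pow_succ]
  ring

/-- The `m`-adic odometer group `ℤ_m`, the inverse limit of `ℤ/m^nℤ`. -/
def Zm (m : ℕ) : Subgroup (∀ n, Multiplicative ℤ ⧸ zmSub m n) := Odo (zmSub m) (zmdec m)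

/-- The scale of `ℤ²` generated by `(p^n, 0)` and `(0, q^n)`, multiplicatively. -/
def zsqSub (p q : ℕ) (n : ℕ) : Subgroup (Multiplicative (ℤ × ℤ)) :=
  Subgroup.closure {Multiplicative.ofAdd ((((p : ℤ) ^ n, 0) : ℤ × ℤ)),
    Multiplicative.ofAdd ((((0 : ℤ), (q : ℤ) ^ n) : ℤ × ℤ))}

theorem zsqdec (p q : ℕ) : ∀ n, zsqSub p q (n + 1) ≤ zsqSub p q n := fun n => by
  rw [zsqSub, Subgroup.closure_le]
  intro y hy
  rw [Set.mem_insert_iff, Set.mem_singleton_iff] at hy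
  rcases hy with rfl | rfl
  · rw [SetLike.mem_coe]
    have h : (Multiplicative.ofAdd ((((p : ℤ) ^ n, 0) : ℤ × ℤ))) ^ ((p : ℕ) : ℤ) =
        Multiplicative.ofAdd ((((p : ℤ) ^ (n + 1), 0) : ℤ × ℤ)) := by
      rw [← ofAdd_zsmul]
      congr 1
      rw [Prod.smul_mk, smul_eq_mul, smul_eq_mul, pow_succ]
      simp [Prod.ext_iff]; ring
    rw [← h]
    exact Subgroup.zpow_mem _ (Subgroup.subset_closure (by simp [zsqSub])) _
  · rw [SetLike.mem_coe]
    have h : (Multiplicative.ofAdd ((((0 : ℤ), (q : ℤ) ^ n) : ℤ × ℤ))) ^ ((q : ℕ) : ℤ) =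
        Multiplicative.ofAdd ((((0 : ℤ), (q : ℤ) ^ (n + 1)) : ℤ × ℤ)) := by
      rw [← ofAdd_zsmul]
      congr 1
      rw [Prod.smul_mk, smul_eq_mul, smul_eq_mul, pow_succ]
      simp [Prod.ext_iff]; ring
    rw [← h]
    exact Subgroup.zpow_mem _ (Subgroup.subset_closure (by simp [zsqSub])) _

end Adic

/-- `C` is a minimal component of the action of the subgroup `H ≤ G` on `X` via `ρ`. -/
def IsMinCompAct {G X : Type*} [Group G] [TopologicalSpace X] (ρ : G →* (X ≃ₜ X))
    (H : Subgroup G) (C : Set X) : Prop :=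
  C.Nonempty ∧ IsClosed C ∧ (∀ h ∈ H, ∀ x ∈ C, ρ h x ∈ C) ∧
    ∀ x ∈ C, C ⊆ closure {y | ∃ h ∈ H, y = ρ h x}

/-!
The subgroup `τ(G)` is dense: a basic open set constrains finitely many coordinates, hence by
compatibility only the highest of them, and that coset has a representative in `G`. A
homeomorphism `f` commuting with left translation by `τ(G)` therefore agrees with `x ↦ x * f 1`
on a dense set, hence everywhere by continuity. Conversely, right translations commute
with left ones. Since `(f ∘ g) 1 = g 1 * f 1`, the map `f ↦ (f 1)⁻¹` is then a group isomorphism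
`Aut(X,G)_L ≃* X`.
-/

section DenseTranslations

variable {X : Type*} [Group X] [TopologicalSpace X] [ContinuousMul X] [T2Space X] {S : Set X}

theorem IsAutLOn.apply_eq_mul_apply_one (hS : Dense S) {f : X ≃ₜ X} (hf : IsAutLOn X S f)
    (x : X) : f x = x * f 1 :=
  congrFun (Continuous.ext_on hS f.continuous (continuous_mul_const _) fun s hs => by
    simpa using hf s hs 1) x

theorem isAutLOn_iff_exists_mulRight (hS : Dense S) (f : X ≃ₜ X) :
    IsAutLOn X S f ↔ ∃ a : X, ∀ x, f x = x * a⁻¹ := by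
  refine ⟨fun hf => ⟨(f 1)⁻¹, fun x => ?_⟩, fun ⟨a, ha⟩ s _ x => ?_⟩
  · rw [inv_inv, hf.apply_eq_mul_apply_one hS]
  · rw [ha, ha, mul_assoc]

def autLgrpMulEquiv (hS : Dense S) : AutLgrp X S ≃* X where
  toFun f := ((f : X ≃ₜ X) 1)⁻¹
  invFun a := ⟨Homeomorph.mulRight a⁻¹, fun s _ x => mul_assoc s x a⁻¹⟩
  left_inv f := Subtype.ext <| Homeomorph.ext fun x => by
    simp [IsAutLOn.apply_eq_mul_apply_one hS f.2 x]
  right_inv a := by simp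
  map_mul' f g := by
    change ((f : X ≃ₜ X) ((g : X ≃ₜ X) 1))⁻¹ = _
    rw [IsAutLOn.apply_eq_mul_apply_one hS f.2, mul_inv_rev]

end DenseTranslations

section Density

variable {G : Type*} [Group G] {Γ : ℕ → Subgroup G} [∀ n, (Γ n).Normal]
  {hdec : ∀ n, Γ (n + 1) ≤ Γ n}

theorem Odo.apply_eq_mk_of_le (x : Odo Γ hdec) {g : G} {j k : ℕ} (hjk : j ≤ k)
    (hk : (x : ∀ n, G ⧸ Γ n) k = g) : (x : ∀ n, G ⧸ Γ n) j = g := by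
  induction k, hjk using Nat.le_induction with
  | base => exact hk
  | succ k _ ih => exact ih (by rw [← x.2 k, hk]; rfl)

variable (Γ hdec) in
theorem denseRange_tau : DenseRange (tau Γ hdec) := by
  rw [DenseRange, dense_iff_inter_open]
  rintro U hU ⟨x, hxU⟩
  obtain ⟨V, hV, rfl⟩ := isOpen_induced_iff.mp hU
  obtain ⟨I, u, hu, hIu⟩ := isOpen_pi_iff.mp hV _ hxU
  obtain ⟨g, hg⟩ := QuotientGroup.mk_surjective ((x : ∀ k, G ⧸ Γ k) (I.sup id))
  refine ⟨tau Γ hdec g, hIu fun i hi => ?_, g, rfl⟩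
  have hxi := (hu i hi).2
  rwa [Odo.apply_eq_mk_of_le (j := i) x (Finset.le_sup (f := id) hi) hg.symm] at hxi

end Density

theorem stmt4_general {G : Type*} [Group G] (Γ : ℕ → Subgroup G) [∀ n, (Γ n).Normal]
    (hdec : ∀ n, Γ (n + 1) ≤ Γ n) :
    (∀ f : ↥(Odo Γ hdec) ≃ₜ ↥(Odo Γ hdec),
        (∀ (g : G) (x : ↥(Odo Γ hdec)), f (tau Γ hdec g * x) = tau Γ hdec g * f x) ↔
          ∃ a : ↥(Odo Γ hdec), ∀ x, f x = x * a⁻¹) ∧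
    Nonempty (↥(AutLgrp ↥(Odo Γ hdec) (Set.range (tau Γ hdec))) ≃* ↥(Odo Γ hdec)) := by
  refine ⟨fun f => ?_, ⟨autLgrpMulEquiv (denseRange_tau Γ hdec)⟩⟩
  rw [← isAutLOn_iff_exists_mulRight (denseRange_tau Γ hdec)]
  simp only [IsAutLOn, Set.forall_mem_range]

/-- homeomorphisms commuting with the left `G`-action are exactly the right
translations; consequently `Aut(X,G)_L ≅ X`. -/
theorem stmt4 {G : Type*} [Group G] (Γ : ℕ → Subgroup G) [∀ n, (Γ n).Normal]
    [∀ n, (Γ n).FiniteIndex] (hdec : ∀ n, Γ (n + 1) ≤ Γ n)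
    (htriv : ∀ g : G, (∀ n, g ∈ Γ n) → g = 1) [Infinite G] :
    (∀ f : ↥(Odo Γ hdec) ≃ₜ ↥(Odo Γ hdec),
        (∀ (g : G) (x : ↥(Odo Γ hdec)), f (tau Γ hdec g * x) = tau Γ hdec g * f x) ↔
          ∃ a : ↥(Odo Γ hdec), ∀ x, f x = x * a⁻¹) ∧
    Nonempty (↥(AutLgrp ↥(Odo Γ hdec) (Set.range (tau Γ hdec))) ≃* ↥(Odo Γ hdec)) :=
  stmt4_general Γ hdec

end OdoPaper
end
end

section
/- Let G, H be infinite finitely generated residually finite groups with scales (G_n), (H_n) and odometers X_1 = G_{(G_n)}, X_2 = H_{(H_n)}. If there exist clopen subgroups U_1 ≤ X_1 and U_2 ≤ X_2 that are isomorphic as topological groups with [X_1 : U_1] = [X_2 : U_2] < ∞, then the topological full groups [[X_1]]_S and [[X_2]]_S are isomorphic, for S ∈ {L,R}. -/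
open scoped Pointwise

noncomputable section
namespace OdoPaper


variable {G : Type*} [Group G]

/-!
Choosing coset representatives and a bijection `β` between the finite coset spaces, the map
`r u ↦ r' e(u)` (with `r'` the representative of `β (r U₁)`) is a homeomorphism `φ : X₁ → X₂`
satisfying `φ (x u) = φ x * e u`. Conjugation by `φ` preserves the left topological full group:
if `f x = ξ x * x`, then `φ f φ⁻¹` translates `y = φ x` on the left by `φ (ξ x * x) * (φ x)⁻¹`,
which depends only on `ξ x` and on the coset `x U₁`, hence is locally constant with finite range.
Conjugation by the inversion `x ↦ x⁻¹` exchanges the left and right topological full groups.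
-/

section HomeoConj

variable {X Y : Type*} [TopologicalSpace X] [TopologicalSpace Y]

def homeoConj (φ : X ≃ₜ Y) : (X ≃ₜ X) ≃* (Y ≃ₜ Y) where
  toFun f := φ.symm.trans (f.trans φ)
  invFun g := φ.trans (g.trans φ.symm)
  left_inv f := by ext; simp
  right_inv g := by ext; simp
  map_mul' f g := by ext; simp

@[simp]
theorem homeoConj_apply (φ : X ≃ₜ Y) (f : X ≃ₜ X) (y : Y) :
    homeoConj φ f y = φ (f (φ.symm y)) :=
  rfl

end HomeoConj

def subgroupEquivOfMapsTo {A B : Type*} [Group A] [Group B] (e : A ≃* B) {S : Subgroup A}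
    {T : Subgroup B} (hST : ∀ a ∈ S, e a ∈ T) (hTS : ∀ b ∈ T, e.symm b ∈ S) : S ≃* T :=
  (e.subgroupMap S).trans <| MulEquiv.subgroupCongr <|
    le_antisymm (Subgroup.map_le_iff_le_comap.2 hST) fun b hb => ⟨e.symm b, hTS b hb, by simp⟩

section Inversion

variable {X : Type*} [Group X] [TopologicalSpace X] [ContinuousInv X]

theorem InFullL.homeoConj_inv {f : X ≃ₜ X} (hf : InFullL X f) :
    InFullR X (homeoConj (Homeomorph.inv X) f) := by
  obtain ⟨ξ, hlc, hfin, hξ⟩ := hf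
  refine ⟨ξ ∘ Inv.inv, hlc.comp_continuous continuous_inv,
    hfin.subset (Set.range_comp_subset_range _ _), fun x => ?_⟩
  simp [hξ]

theorem InFullR.homeoConj_inv {f : X ≃ₜ X} (hf : InFullR X f) :
    InFullL X (homeoConj (Homeomorph.inv X) f) := by
  obtain ⟨ξ, hlc, hfin, hξ⟩ := hf
  refine ⟨ξ ∘ Inv.inv, hlc.comp_continuous continuous_inv,
    hfin.subset (Set.range_comp_subset_range _ _), fun x => ?_⟩
  simp [hξ]

def TFGL.mulEquivTFGR : TFGL X ≃* TFGR X :=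
  subgroupEquivOfMapsTo (homeoConj (Homeomorph.inv X)) (fun _ => InFullL.homeoConj_inv)
    fun _ => InFullR.homeoConj_inv

end Inversion

section CosetDecomposition

variable {X Y : Type*} [Group X] [Group Y]

theorem out_mk_inv_mul_mem (U : Subgroup X) (x : X) : (x : X ⧸ U).out⁻¹ * x ∈ U :=
  QuotientGroup.eq.mp (QuotientGroup.out_eq' _)

def cosetProdEquiv (U : Subgroup X) : X ≃ (X ⧸ U) × U where
  toFun x := (x, ⟨(x : X ⧸ U).out⁻¹ * x, out_mk_inv_mul_mem U x⟩)
  invFun p := p.1.out * p.2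
  left_inv x := mul_inv_cancel_left _ _
  right_inv := fun ⟨q, u⟩ => by
    have hq : ((q.out * u : X) : X ⧸ U) = q := by
      rw [QuotientGroup.mk_mul_of_mem _ u.2, QuotientGroup.out_eq']
    ext
    · exact hq
    · simp only [hq, inv_mul_cancel_left]

theorem cosetProdEquiv_mul (U : Subgroup X) (x : X) (u : U) :
    cosetProdEquiv U (x * u) = ((cosetProdEquiv U x).1, (cosetProdEquiv U x).2 * u) := by
  have hx : ((x * u : X) : X ⧸ U) = x := QuotientGroup.mk_mul_of_mem _ u.2
  ext
  · exact hx
  · simp only [cosetProdEquiv, Equiv.coe_fn_mk, Subgroup.coe_mul, hx, mul_assoc]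

@[simp]
theorem cosetProdEquiv_symm_apply (U : Subgroup X) (p : (X ⧸ U) × U) :
    (cosetProdEquiv U).symm p = p.1.out * p.2 := rfl

variable {U₁ : Subgroup X} {U₂ : Subgroup Y}

def cosetTransfer (e : U₁ ≃* U₂) (β : X ⧸ U₁ ≃ Y ⧸ U₂) : X ≃ Y :=
  (cosetProdEquiv U₁).trans ((β.prodCongr e.toEquiv).trans (cosetProdEquiv U₂).symm)

theorem cosetTransfer_mul (e : U₁ ≃* U₂) (β : X ⧸ U₁ ≃ Y ⧸ U₂) (x : X) (u : U₁) :
    cosetTransfer e β (x * u) = cosetTransfer e β x * e u := by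
  simp only [cosetTransfer, Equiv.trans_apply, cosetProdEquiv_mul, Equiv.prodCongr_apply,
    Prod.map, MulEquiv.toEquiv_eq_coe, MulEquiv.coe_toEquiv, map_mul, cosetProdEquiv_symm_apply,
    Subgroup.coe_mul, mul_assoc]

end CosetDecomposition

section Transfer

variable {X Y : Type*} [Group X] [Group Y] [TopologicalSpace X] [TopologicalSpace Y]
  [ContinuousMul X]

theorem isLocallyConstant_mk {U : Subgroup X} (hU : IsOpen (U : Set X)) :
    IsLocallyConstant (QuotientGroup.mk : X → X ⧸ U) :=
  IsLocallyConstant.iff_isOpen_fiber.2 fun q => by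
    induction q using QuotientGroup.induction_on with
    | H x =>
      have hfiber : QuotientGroup.mk ⁻¹' {(x : X ⧸ U)} = (x⁻¹ * ·) ⁻¹' U :=
        Set.ext fun _ => eq_comm.trans QuotientGroup.eq
      rw [hfiber]
      exact hU.preimage (continuous_const_mul _)

theorem InFullL.homeoConj_of_map_mul_eq {U : Subgroup X} (hU : IsOpen (U : Set X))
    [Finite (X ⧸ U)] {φ : X ≃ₜ Y} {ε : U → Y} (hφ : ∀ x (u : U), φ (x * u) = φ x * ε u) {f : X ≃ₜ X}
    (hf : InFullL X f) : InFullL Y (homeoConj φ f) := by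
  obtain ⟨ξ, hlc, hfin, hξ⟩ := hf
  set c : X → X ⧸ U → Y := fun s q => φ (s * q.out) * (φ q.out)⁻¹
  have hc : ∀ s x, φ (s * x) * (φ x)⁻¹ = c s x := fun s x => by
    obtain ⟨u, hu⟩ := QuotientGroup.mk_out_eq_mul U x
    simp only [c, hu, ← mul_assoc, hφ]
    group
  refine ⟨fun y => c (ξ (φ.symm y)) (φ.symm y),
    ((hlc.prodMk (isLocallyConstant_mk hU)).comp (Function.uncurry c)).comp_continuous
      φ.symm.continuous,
    ((hfin.prod Set.finite_univ).image (Function.uncurry c)).subset ?_, fun y => ?_⟩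
  · rintro _ ⟨y, rfl⟩
    exact ⟨(ξ (φ.symm y), φ.symm y), ⟨⟨_, rfl⟩, trivial⟩, rfl⟩
  · calc homeoConj φ f y = φ (ξ (φ.symm y) * φ.symm y) * (φ (φ.symm y))⁻¹ * y := by
          rw [φ.apply_symm_apply, inv_mul_cancel_right, homeoConj_apply, hξ]
      _ = c (ξ (φ.symm y)) (φ.symm y) * y := by rw [hc]

variable [ContinuousMul Y]

theorem continuous_of_map_mul_eq {U : Subgroup X} (hU : IsOpen (U : Set X)) {φ : X → Y}
    {ε : U → Y} (hε : Continuous ε) (hφ : ∀ x (u : U), φ (x * u) = φ x * ε u) :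
    Continuous φ :=
  continuous_iff_continuousAt.2 fun x => by
    have hx : Topology.IsOpenEmbedding fun u : U => x * u :=
      (Homeomorph.mulLeft x).isOpenEmbedding.comp hU.isOpenEmbedding_subtypeVal
    have h : ContinuousAt (φ ∘ fun u : U => x * u) 1 := by
      simp only [Function.comp_def, hφ]
      exact (continuous_const.mul hε).continuousAt
    simpa using hx.continuousAt_iff.1 h

variable {U₁ : Subgroup X} {U₂ : Subgroup Y}

def cosetTransferHomeomorph (hU₁ : IsOpen (U₁ : Set X)) (hU₂ : IsOpen (U₂ : Set Y))
    (e : U₁ ≃ₜ* U₂) (β : X ⧸ U₁ ≃ Y ⧸ U₂) : X ≃ₜ Y where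
  toEquiv := cosetTransfer e.toMulEquiv β
  continuous_toFun := continuous_of_map_mul_eq hU₁ (continuous_subtype_val.comp e.continuous)
    (cosetTransfer_mul e.toMulEquiv β)
  continuous_invFun := continuous_of_map_mul_eq hU₂
    (continuous_subtype_val.comp e.symm.continuous) (cosetTransfer_mul e.symm.toMulEquiv β.symm)

theorem TFGL.nonempty_mulEquiv_of_continuousMulEquiv (hU₁ : IsOpen (U₁ : Set X))
    (hU₂ : IsOpen (U₂ : Set Y)) [U₁.FiniteIndex] (hidx : U₁.index = U₂.index) (e : U₁ ≃ₜ* U₂) :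
    Nonempty (TFGL X ≃* TFGL Y) := by
  have : U₂.FiniteIndex := ⟨hidx ▸ Subgroup.FiniteIndex.index_ne_zero⟩
  obtain ⟨β⟩ := Finite.card_eq.1 hidx
  exact ⟨subgroupEquivOfMapsTo (homeoConj (cosetTransferHomeomorph hU₁ hU₂ e β))
    (fun _ => InFullL.homeoConj_of_map_mul_eq hU₁ (cosetTransfer_mul e.toMulEquiv β))
    fun _ => InFullL.homeoConj_of_map_mul_eq hU₂ (cosetTransfer_mul e.symm.toMulEquiv β.symm)⟩

end Transfer

theorem stmt10_general {G H : Type*} [Group G] [Group H]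
    (ΓG : ℕ → Subgroup G) [∀ n, (ΓG n).Normal]
    (hG : ∀ n, ΓG (n + 1) ≤ ΓG n)
    (ΓH : ℕ → Subgroup H) [∀ n, (ΓH n).Normal]
    (hH : ∀ n, ΓH (n + 1) ≤ ΓH n)
    (h : ∃ (U₁ : Subgroup ↥(Odo ΓG hG)) (U₂ : Subgroup ↥(Odo ΓH hH)),
      IsClopen (U₁ : Set ↥(Odo ΓG hG)) ∧ IsClopen (U₂ : Set ↥(Odo ΓH hH)) ∧
      U₁.index = U₂.index ∧ U₁.index ≠ 0 ∧
      ∃ e : ↥U₁ ≃* ↥U₂, Continuous e ∧ Continuous e.symm) :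
    Nonempty (↥(TFGR ↥(Odo ΓG hG)) ≃* ↥(TFGR ↥(Odo ΓH hH))) ∧
    Nonempty (↥(TFGL ↥(Odo ΓG hG)) ≃* ↥(TFGL ↥(Odo ΓH hH))) := by
  obtain ⟨U₁, U₂, hU₁, hU₂, hidx, hne, e, he, he'⟩ := h
  have : U₁.FiniteIndex := ⟨hne⟩
  obtain ⟨L⟩ := TFGL.nonempty_mulEquiv_of_continuousMulEquiv hU₁.isOpen hU₂.isOpen hidx
    { e with continuous_toFun := he, continuous_invFun := he' }
  exact ⟨⟨TFGL.mulEquivTFGR.symm.trans (L.trans TFGL.mulEquivTFGR)⟩, ⟨L⟩⟩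

/-- isomorphic clopen subgroups of the same finite index yield isomorphic
topological full groups (both for the left and right actions). -/
theorem stmt10 {G H : Type*} [Group G] [Group H] [Infinite G] [Infinite H]
    [Group.FG G] [Group.FG H]
    (ΓG : ℕ → Subgroup G) [∀ n, (ΓG n).Normal] [∀ n, (ΓG n).FiniteIndex]
    (hG : ∀ n, ΓG (n + 1) ≤ ΓG n) (htG : ∀ g : G, (∀ n, g ∈ ΓG n) → g = 1)
    (ΓH : ℕ → Subgroup H) [∀ n, (ΓH n).Normal] [∀ n, (ΓH n).FiniteIndex]
    (hH : ∀ n, ΓH (n + 1) ≤ ΓH n) (htH : ∀ h : H, (∀ n, h ∈ ΓH n) → h = 1)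
    (h : ∃ (U₁ : Subgroup ↥(Odo ΓG hG)) (U₂ : Subgroup ↥(Odo ΓH hH)),
      IsClopen (U₁ : Set ↥(Odo ΓG hG)) ∧ IsClopen (U₂ : Set ↥(Odo ΓH hH)) ∧
      U₁.index = U₂.index ∧ U₁.index ≠ 0 ∧
      ∃ e : ↥U₁ ≃* ↥U₂, Continuous e ∧ Continuous e.symm) :
    Nonempty (↥(TFGR ↥(Odo ΓG hG)) ≃* ↥(TFGR ↥(Odo ΓH hH))) ∧
    Nonempty (↥(TFGL ↥(Odo ΓG hG)) ≃* ↥(TFGL ↥(Odo ΓH hH))) :=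
  stmt10_general ΓG hG ΓH hH h

end OdoPaper
end
end

section
/- Let X be a compact topological group which is an odometer (profinite, metrizable, infinite), and let (U_n) be a decreasing sequence of clopen subgroups of X with trivial intersection. For each n, the group [[X]]_{U_n,L} of elements of the topological full group of the left translation action that act as a left translation on each left coset aU_n is isomorphic to the semidirect product [[X]]^0_{U_n,L} ⋊ Sym(X/U_n), where [[X]]^0_{U_n,L} is the subgroup of elements preserving each coset aU_n (acting on aU_n by left multiplication by an element of aU_na^{-1}). -/
/-! Every `f ∈ [[X]]_{U,L}` maps cosets of `U` onto cosets, which gives a homomorphism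
`[[X]]_{U,L} → Sym(X ⧸ U)` with kernel `[[X]]⁰_{U,L}`. Fixing representatives `r_q` of the
cosets, sending `σ` to the map that multiplies the coset `q` on the left by `r_{σ q} r_q⁻¹`
splits this homomorphism; that map is a homeomorphism because the multiplier is constant on
cosets, which are open. A split extension is a semidirect product. -/

open scoped Pointwise

noncomputable section
namespace OdoPaper


variable {G : Type*} [Group G]

section CosetShift

variable {X : Type*} [Group X] (U : Subgroup X)

def cosetShift (σ : Equiv.Perm (X ⧸ U)) (x : X) : X :=
  (σ x).out * (x : X ⧸ U).out⁻¹

theorem cosetShift_one : cosetShift U 1 = 1 := by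
  funext x
  simp [cosetShift]

theorem cosetShift_congr (σ : Equiv.Perm (X ⧸ U)) {x y : X} (h : (x : X ⧸ U) = y) :
    cosetShift U σ x = cosetShift U σ y := by
  rw [cosetShift, h, cosetShift]

theorem mk_cosetShift_mul (σ : Equiv.Perm (X ⧸ U)) (x : X) :
    ((cosetShift U σ x * x : X) : X ⧸ U) = σ x := by
  have hx : (x : X ⧸ U).out⁻¹ * x ∈ U := QuotientGroup.eq.1 (QuotientGroup.out_eq' _)
  rw [cosetShift, mul_assoc, QuotientGroup.mk_mul_of_mem _ hx, QuotientGroup.out_eq']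

theorem cosetShift_mul (σ τ : Equiv.Perm (X ⧸ U)) (x : X) :
    cosetShift U (σ * τ) x * x =
      cosetShift U σ (cosetShift U τ x * x) * (cosetShift U τ x * x) := by
  have hτ := mk_cosetShift_mul U τ x
  simp only [cosetShift] at hτ ⊢
  rw [hτ, Equiv.Perm.mul_apply]
  group

end CosetShift

section CosetPermutation

variable {X : Type*} [Group X] [TopologicalSpace X] (U : Subgroup X)

theorem full0L_le_fullUL : full0L X U ≤ fullUL X U := fun f hf a => by
  obtain ⟨u, -, h⟩ := hf a
  exact ⟨a * u * a⁻¹, h⟩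

theorem inv_apply_mul_apply_mem_of_mem_fullUL {f : X ≃ₜ X} (hf : f ∈ fullUL X U) {x y : X}
    (h : x⁻¹ * y ∈ U) : (f x)⁻¹ * f y ∈ U := by
  obtain ⟨ξ, hξ⟩ := hf y
  rwa [hξ x (QuotientGroup.eq.2 h), hξ y rfl, mul_inv_rev, mul_assoc, inv_mul_cancel_left]

def cosetPerm {f : X ≃ₜ X} (hf : f ∈ fullUL X U) : Equiv.Perm (X ⧸ U) where
  toFun := Quotient.map' f fun _ _ h => by
    rw [QuotientGroup.leftRel_apply] at h ⊢
    exact inv_apply_mul_apply_mem_of_mem_fullUL U hf h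
  invFun := Quotient.map' f.symm fun _ _ h => by
    rw [QuotientGroup.leftRel_apply] at h ⊢
    exact inv_apply_mul_apply_mem_of_mem_fullUL U ((fullUL X U).inv_mem hf) h
  left_inv q := QuotientGroup.induction_on q fun x => congrArg _ (f.symm_apply_apply x)
  right_inv q := QuotientGroup.induction_on q fun x => congrArg _ (f.apply_symm_apply x)

def cosetPermHom : fullUL X U →* Equiv.Perm (X ⧸ U) where
  toFun f := cosetPerm U f.2
  map_one' := Equiv.ext fun q => QuotientGroup.induction_on q fun _ => rfl
  map_mul' _ _ := Equiv.ext fun q => QuotientGroup.induction_on q fun _ => rfl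

theorem cosetPermHom_apply_mk (f : fullUL X U) (x : X) :
    cosetPermHom U f x = ((f : X ≃ₜ X) x : X ⧸ U) := rfl

theorem mem_full0L_iff {f : X ≃ₜ X} (hf : f ∈ fullUL X U) :
    f ∈ full0L X U ↔ cosetPermHom U ⟨f, hf⟩ = 1 := by
  constructor
  · refine fun h0 => Equiv.ext fun q => QuotientGroup.induction_on q fun x => ?_
    obtain ⟨u, hu, hx⟩ := h0 x
    rw [cosetPermHom_apply_mk, hx x rfl, inv_mul_cancel_right]
    exact QuotientGroup.mk_mul_of_mem x hu
  · intro h1 a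
    obtain ⟨ξ, hξ⟩ := hf a
    have hfa : ((ξ * a : X) : X ⧸ U) = a := by
      rw [← hξ a rfl]
      exact DFunLike.congr_fun h1 (a : X ⧸ U)
    refine ⟨a⁻¹ * ξ * a, ?_, fun x hx => by rw [hξ x hx]; group⟩
    simpa [mul_assoc] using U.inv_mem (QuotientGroup.eq.1 hfa)

theorem range_inclusion_full0L_eq_ker_cosetPermHom :
    (Subgroup.inclusion (full0L_le_fullUL U)).range = (cosetPermHom U).ker := by
  ext f
  rw [Subgroup.inclusion_range, Subgroup.mem_subgroupOf, MonoidHom.mem_ker, mem_full0L_iff U f.2]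

end CosetPermutation

section Splitting

variable {X : Type*} [Group X] [TopologicalSpace X] [ContinuousMul X] {U : Subgroup X}

theorem isLocallyConstant_cosetShift (hU : IsOpen (U : Set X)) (σ : Equiv.Perm (X ⧸ U)) :
    IsLocallyConstant (cosetShift U σ) := by
  refine (IsLocallyConstant.iff_exists_open _).2 fun x =>
    ⟨x • (U : Set X), hU.leftCoset x, ⟨1, U.one_mem, mul_one x⟩, fun y hy => ?_⟩
  have hxy : (y : X ⧸ U) = x := (QuotientGroup.eq.2 ((mem_leftCoset_iff x).1 hy)).symm
  simp only [cosetShift, hxy]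

variable (hU : IsOpen (U : Set X))

def cosetShiftHomeomorph (σ : Equiv.Perm (X ⧸ U)) : X ≃ₜ X where
  toFun x := cosetShift U σ x * x
  invFun x := cosetShift U σ⁻¹ x * x
  left_inv x := by
    show cosetShift U σ⁻¹ (cosetShift U σ x * x) * (cosetShift U σ x * x) = x
    rw [← cosetShift_mul, inv_mul_cancel, cosetShift_one, Pi.one_apply, one_mul]
  right_inv x := by
    show cosetShift U σ (cosetShift U σ⁻¹ x * x) * (cosetShift U σ⁻¹ x * x) = x
    rw [← cosetShift_mul, mul_inv_cancel, cosetShift_one, Pi.one_apply, one_mul]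
  continuous_toFun := (isLocallyConstant_cosetShift hU σ).continuous.mul continuous_id
  continuous_invFun := (isLocallyConstant_cosetShift hU σ⁻¹).continuous.mul continuous_id

theorem cosetShiftHomeomorph_mem_fullUL (σ : Equiv.Perm (X ⧸ U)) :
    cosetShiftHomeomorph hU σ ∈ fullUL X U := fun a =>
  ⟨cosetShift U σ a, fun x hx => by
    rw [← cosetShift_congr U σ hx]
    rfl⟩

def cosetShiftHom : Equiv.Perm (X ⧸ U) →* fullUL X U where
  toFun σ := ⟨cosetShiftHomeomorph hU σ, cosetShiftHomeomorph_mem_fullUL hU σ⟩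
  map_one' := Subtype.ext <| Homeomorph.ext fun x => by
    simp only [cosetShiftHomeomorph, cosetShift_one]
    exact one_mul x
  map_mul' σ τ := Subtype.ext <| Homeomorph.ext fun x => cosetShift_mul U σ τ x

theorem cosetPermHom_cosetShiftHom (σ : Equiv.Perm (X ⧸ U)) :
    cosetPermHom U (cosetShiftHom hU σ) = σ :=
  Equiv.ext fun q => QuotientGroup.induction_on q fun x => mk_cosetShift_mul U σ x

def fullULExtension : GroupExtension (full0L X U) (fullUL X U) (Equiv.Perm (X ⧸ U)) where
  inl := Subgroup.inclusion (full0L_le_fullUL U)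
  rightHom := cosetPermHom U
  inl_injective := Subgroup.inclusion_injective _
  range_inl_eq_ker_rightHom := range_inclusion_full0L_eq_ker_cosetPermHom U
  rightHom_surjective σ := ⟨_, cosetPermHom_cosetShiftHom hU σ⟩

def fullULSplitting : (fullULExtension hU).Splitting :=
  ⟨cosetShiftHom hU, cosetPermHom_cosetShiftHom hU⟩

end Splitting

theorem stmt11_general {X : Type*} [Group X] [TopologicalSpace X] [IsTopologicalGroup X]
    (U : ℕ → Subgroup X)
    (hclopen : ∀ n, IsClopen ((U n : Subgroup X) : Set X)) (n : ℕ) :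
    ∃ φ : Equiv.Perm (X ⧸ U n) →* MulAut ↥(full0L X (U n)),
      Nonempty (↥(fullUL X (U n)) ≃*
        (↥(full0L X (U n)) ⋊[φ] Equiv.Perm (X ⧸ U n))) :=
  let s := fullULSplitting (hclopen n).isOpen
  ⟨s.conjAct, ⟨s.semidirectProductMulEquiv.symm⟩⟩

/-- `[[X]]_{Uₙ,L} ≅ [[X]]⁰_{Uₙ,L} ⋊ Sym(X/Uₙ)` for a profinite group `X`
and a decreasing sequence of clopen subgroups with trivial intersection. -/
theorem stmt11 {X : Type*} [Group X] [TopologicalSpace X] [IsTopologicalGroup X]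
    [CompactSpace X] [TotallyDisconnectedSpace X] [TopologicalSpace.MetrizableSpace X]
    [Infinite X] (U : ℕ → Subgroup X) (hdec : ∀ n, U (n + 1) ≤ U n)
    (hclopen : ∀ n, IsClopen ((U n : Subgroup X) : Set X))
    (htriv : ∀ x : X, (∀ n, x ∈ U n) → x = 1) (n : ℕ) :
    ∃ φ : Equiv.Perm (X ⧸ U n) →* MulAut ↥(full0L X (U n)),
      Nonempty (↥(fullUL X (U n)) ≃*
        (↥(full0L X (U n)) ⋊[φ] Equiv.Perm (X ⧸ U n))) :=
  stmt11_general U hclopen n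

end OdoPaper
end
end

section
/- Let G be an infinite residually finite group with scale (Γ_n) and X the odometer. For every n, the automorphism group Aut(X, Γ_n)_L of the left Γ_n-action on X equals [[X]]_{n,R}, the set of homeomorphisms which on each cylinder of level n act as right multiplication by some element of X; moreover Aut(X, Γ_n)_L is isomorphic to the semidirect product X_n^{G/Γ_n} ⋊ Sym(G/Γ_n), where X_n is the clopen subgroup [1]_n of X. -/
/-!
Let `π : X → G/Γₙ` be the level-`n` coordinate of the odometer, with kernel `Xₙ`. Since `τ(Γₙ)`
is dense in `Xₙ`, a homeomorphism commutes with `τ(Γₙ)` if and only if it commutes with left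
multiplication by `Xₙ`, and an `Xₙ`-equivariant map moves each fibre `Xₙ x` by a right
translation. Choosing a section `s` of `π` writes every point uniquely as `k * s a` with
`k ∈ Xₙ`, so `X ≅ Xₙ × G/Γₙ` as left `Xₙ`-spaces; the equivariant homeomorphisms are then
exactly the maps `k * s a ↦ k * c a * s (σ a)` with `c : G/Γₙ → Xₙ` and `σ` a permutation,
which compose as the wreath product `Xₙ ≀ Sym(G/Γₙ)`.
-/

open scoped Pointwise

noncomputable section
namespace OdoPaper


variable {G : Type*} [Group G]

section Equivariance

variable {X : Type*} [Group X] [TopologicalSpace X]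

theorem IsAutLOn.mono {S T : Set X} {f : X ≃ₜ X} (hST : S ⊆ T) (hf : IsAutLOn X T f) :
    IsAutLOn X S f :=
  fun s hs => hf s (hST hs)

theorem IsAutLOn.closure [ContinuousMul X] [T2Space X] {S : Set X} {f : X ≃ₜ X}
    (hf : IsAutLOn X S f) : IsAutLOn X (closure S) f := by
  intro s hs x
  have hclosed : IsClosed {t : X | f (t * x) = t * f x} :=
    isClosed_eq (f.continuous.comp (continuous_mul_const x)) (continuous_mul_const (f x))
  exact closure_minimal (fun t ht => hf t ht x) hclosed hs

theorem isAutLOn_iff_of_subset_closure [ContinuousMul X] [T2Space X] {S T : Set X}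
    (hST : S ⊆ T) (hTS : T ⊆ closure S) (f : X ≃ₜ X) : IsAutLOn X S f ↔ IsAutLOn X T f :=
  ⟨fun hf => hf.closure.mono hTS, fun hf => hf.mono hST⟩

variable {Q : Type*} [Group Q]

theorem isAutLOn_ker_iff (π : X →* Q) (f : X ≃ₜ X) :
    IsAutLOn X π.ker f ↔ ∀ a, ∃ ξ : X, ∀ x, π x = a → f x = x * ξ⁻¹ := by
  constructor
  · intro hf a
    by_cases ha : ∃ x₀, π x₀ = a
    · obtain ⟨x₀, rfl⟩ := ha
      refine ⟨(f x₀)⁻¹ * x₀, fun x hx => ?_⟩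
      have hk : x * x₀⁻¹ ∈ π.ker := by
        rw [MonoidHom.mem_ker, map_mul, map_inv, hx, mul_inv_cancel]
      have := hf _ hk x₀
      rw [inv_mul_cancel_right] at this
      rw [this]
      group
    · exact ⟨1, fun x hx => absurd ⟨x, hx⟩ ha⟩
  · intro hf k hk x
    obtain ⟨ξ, hξ⟩ := hf (π x)
    have hkx : π (k * x) = π x := by rw [map_mul, (MonoidHom.mem_ker).1 hk, one_mul]
    rw [hξ _ hkx, hξ x rfl, mul_assoc]

end Equivariance

section Wreath

variable {X Q : Type*} [Group X] [Group Q] {π : X →* Q} {s : Q → X}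
  (hs : Function.RightInverse s π)

def kerPart (x : X) : π.ker :=
  ⟨x * (s (π x))⁻¹, by rw [MonoidHom.mem_ker, map_mul, map_inv, hs, mul_inv_cancel]⟩

theorem kerPart_mul_section (x : X) : (kerPart hs x : X) * s (π x) = x :=
  inv_mul_cancel_right x _

theorem map_ker_mul (k : π.ker) (x : X) : π (k * x) = π x := by
  rw [map_mul, (MonoidHom.mem_ker).1 k.2, one_mul]

theorem kerPart_ker_mul (k : π.ker) (x : X) : kerPart hs (k * x) = k * kerPart hs x :=
  Subtype.ext <| by simp only [kerPart, map_ker_mul, Subgroup.coe_mul, mul_assoc]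

theorem kerPart_section (a : Q) : kerPart hs (s a) = 1 :=
  Subtype.ext <| by simp only [kerPart, hs a, mul_inv_cancel, OneMemClass.coe_one]

theorem kerPart_ker_mul_section (k : π.ker) (a : Q) : kerPart hs (k * s a) = k :=
  Subtype.ext <| by simp only [kerPart, map_ker_mul, hs a, mul_inv_cancel_right]

/-- In the coordinates `x = k * s a`, this is `k * s a ↦ k * c a * s (τ a)`. -/
def shear (c : Q → π.ker) (τ : Q → Q) (x : X) : X :=
  ((kerPart hs x * c (π x) : π.ker) : X) * s (τ (π x))

theorem map_shear (c : Q → π.ker) (τ : Q → Q) (x : X) : π (shear hs c τ x) = τ (π x) := by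
  rw [shear, map_ker_mul, hs]

theorem kerPart_shear (c : Q → π.ker) (τ : Q → Q) (x : X) :
    kerPart hs (shear hs c τ x) = kerPart hs x * c (π x) :=
  kerPart_ker_mul_section hs _ _

theorem shear_ker_mul (c : Q → π.ker) (τ : Q → Q) (k : π.ker) (x : X) :
    shear hs c τ (k * x) = k * shear hs c τ x := by
  simp only [shear, kerPart_ker_mul, map_ker_mul, Subgroup.coe_mul, mul_assoc]

theorem shear_shear (c c' : Q → π.ker) (τ τ' : Q → Q) (x : X) :
    shear hs c τ (shear hs c' τ' x) = shear hs (fun a => c' a * c (τ' a)) (τ ∘ τ') x := by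
  rw [shear, kerPart_shear, map_shear, shear, mul_assoc, Function.comp_apply]

theorem shear_one_id (x : X) : shear hs (fun _ => 1) (fun a => a) x = x := by
  rw [shear, mul_one, kerPart_mul_section]

variable [TopologicalSpace X]

theorem IsAutLOn.apply_eq_kerPart_mul {f : X ≃ₜ X} (hf : IsAutLOn X π.ker f) (x : X) :
    f x = kerPart hs x * f (s (π x)) := by
  conv_lhs => rw [← kerPart_mul_section hs x]
  exact hf _ (kerPart hs x).2 _

theorem IsAutLOn.map_apply_eq {f : X ≃ₜ X} (hf : IsAutLOn X π.ker f) {x y : X}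
    (hxy : π x = π y) : π (f x) = π (f y) := by
  have hk : y * x⁻¹ ∈ π.ker := by
    rw [MonoidHom.mem_ker, map_mul, map_inv, hxy, mul_inv_cancel]
  rw [← inv_mul_cancel_right y x, hf _ hk, map_mul, (MonoidHom.mem_ker).1 hk, one_mul]

def fibrePerm : AutLgrp X π.ker →* Equiv.Perm Q where
  toFun f :=
    { toFun a := π (f.1 (s a))
      invFun a := π (f.1.symm (s a))
      left_inv a := ((f⁻¹).2.map_apply_eq (hs _)).trans
        ((congrArg π (f.1.symm_apply_apply (s a))).trans (hs a))
      right_inv a := (f.2.map_apply_eq (hs _)).trans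
        ((congrArg π (f.1.apply_symm_apply (s a))).trans (hs a)) }
  map_one' := Equiv.ext hs
  map_mul' f _ := Equiv.ext fun _ => f.2.map_apply_eq (hs _).symm

theorem map_apply_eq_fibrePerm (f : AutLgrp X π.ker) (x : X) :
    π ((f : X ≃ₜ X) x) = fibrePerm hs f (π x) :=
  f.2.map_apply_eq (hs _).symm

theorem map_symm_apply_eq_fibrePerm_inv (f : AutLgrp X π.ker) (x : X) :
    π ((f : X ≃ₜ X).symm x) = (fibrePerm hs f)⁻¹ (π x) := by
  rw [← map_inv]
  exact map_apply_eq_fibrePerm hs f⁻¹ x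

theorem symm_apply_ker_mul (f : AutLgrp X π.ker) (k : π.ker) (x : X) :
    (f : X ≃ₜ X).symm (k * x) = k * (f : X ≃ₜ X).symm x :=
  (f⁻¹).2 _ k.2 x

theorem symm_apply_section (f : AutLgrp X π.ker) (a : Q) :
    (f : X ≃ₜ X).symm (s a)
      = kerPart hs ((f : X ≃ₜ X).symm (s a)) * s ((fibrePerm hs f)⁻¹ a) := by
  have h := kerPart_mul_section hs ((f : X ≃ₜ X).symm (s a))
  rwa [map_symm_apply_eq_fibrePerm_inv, hs, eq_comm] at h

theorem apply_section (f : AutLgrp X π.ker) (b : Q) :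
    (f : X ≃ₜ X) (s b) =
      (kerPart hs ((f : X ≃ₜ X).symm (s (fibrePerm hs f b))) : X)⁻¹ *
        s (fibrePerm hs f b) := by
  have h := symm_apply_section hs f (fibrePerm hs f b)
  rw [Equiv.Perm.inv_eq_iff_eq.2 rfl] at h
  rw [eq_inv_mul_iff_mul_eq, ← f.2 _ (Subtype.property _), ← h]
  exact f.1.apply_symm_apply _

def toSemidirect (f : AutLgrp X π.ker) : (Q → π.ker) ⋊[mulAutArrow] Equiv.Perm Q :=
  ⟨fun a => kerPart hs ((f : X ≃ₜ X).symm (s a)), fibrePerm hs f⟩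

theorem toSemidirect_mul (f g : AutLgrp X π.ker) :
    toSemidirect hs (f * g) = toSemidirect hs f * toSemidirect hs g := by
  refine SemidirectProduct.ext (funext fun a => ?_) (map_mul _ f g)
  have h : kerPart hs ((g : X ≃ₜ X).symm ((f : X ≃ₜ X).symm (s a)))
      = kerPart hs ((f : X ≃ₜ X).symm (s a))
        * kerPart hs ((g : X ≃ₜ X).symm (s ((fibrePerm hs f)⁻¹ a))) := by
    conv_lhs => rw [symm_apply_section hs f a]
    rw [symm_apply_ker_mul, kerPart_ker_mul]
  exact h

variable [ContinuousMul X] [TopologicalSpace Q] [DiscreteTopology Q]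

theorem continuous_shear (hπ : Continuous π) (c : Q → π.ker) (τ : Q → Q) :
    Continuous (shear hs c τ) := by
  have hfib : ∀ g : Q → X, Continuous fun x => g (π x) :=
    fun g => continuous_of_discreteTopology.comp hπ
  show Continuous fun x => x * (s (π x))⁻¹ * (c (π x) : X) * s (τ (π x))
  exact ((continuous_id'.mul (hfib fun a => (s a)⁻¹)).mul (hfib fun a => (c a : X))).mul
    (hfib fun a => s (τ a))

def shearHomeo (hπ : Continuous π) (c : Q → π.ker) (τ : Equiv.Perm Q) : X ≃ₜ X where
  toFun := shear hs c τ
  invFun := shear hs (fun a => (c (τ.symm a))⁻¹) τ.symm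
  left_inv x := by
    rw [shear_shear]
    simpa only [Equiv.symm_apply_apply, Equiv.apply_symm_apply, mul_inv_cancel, inv_mul_cancel,
      Function.comp_def] using shear_one_id hs x
  right_inv x := by
    rw [shear_shear]
    simpa only [Equiv.symm_apply_apply, Equiv.apply_symm_apply, mul_inv_cancel, inv_mul_cancel,
      Function.comp_def] using shear_one_id hs x
  continuous_toFun := continuous_shear hs hπ _ _
  continuous_invFun := continuous_shear hs hπ _ _

def ofSemidirect (hπ : Continuous π) (p : (Q → π.ker) ⋊[mulAutArrow] Equiv.Perm Q) :
    AutLgrp X π.ker :=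
  ⟨shearHomeo hs hπ (fun a => (p.left (p.right a))⁻¹) p.right,
    fun k hk x => shear_ker_mul hs (fun a => (p.left (p.right a))⁻¹) p.right ⟨k, hk⟩ x⟩

theorem ofSemidirect_toSemidirect (hπ : Continuous π) (f : AutLgrp X π.ker) :
    ofSemidirect hs hπ (toSemidirect hs f) = f := by
  refine Subtype.ext (Homeomorph.ext fun x => ?_)
  show shear hs (fun a => (kerPart hs ((f : X ≃ₜ X).symm (s (fibrePerm hs f a))))⁻¹)
    (fibrePerm hs f) x = (f : X ≃ₜ X) x
  rw [f.2.apply_eq_kerPart_mul hs x, apply_section hs f, shear, Subgroup.coe_mul,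
    Subgroup.coe_inv, mul_assoc]

theorem toSemidirect_ofSemidirect (hπ : Continuous π)
    (p : (Q → π.ker) ⋊[mulAutArrow] Equiv.Perm Q) :
    toSemidirect hs (ofSemidirect hs hπ p) = p := by
  refine SemidirectProduct.ext (funext fun a => ?_) (Equiv.ext fun a => ?_)
  · show kerPart hs (shear hs (fun a => (p.left (p.right (p.right.symm a)))⁻¹⁻¹) p.right.symm
      (s a)) = p.left a
    rw [kerPart_shear, kerPart_section, one_mul, hs, inv_inv, Equiv.apply_symm_apply]
  · show π (shear hs (fun a => (p.left (p.right a))⁻¹) p.right (s a)) = p.right a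
    rw [map_shear, hs]

def autKerEquivSemidirect (hπ : Continuous π) :
    AutLgrp X π.ker ≃* (Q → π.ker) ⋊[mulAutArrow] Equiv.Perm Q :=
  MulEquiv.mk' ⟨toSemidirect hs, ofSemidirect hs hπ, ofSemidirect_toSemidirect hs hπ,
    toSemidirect_ofSemidirect hs hπ⟩ (toSemidirect_mul hs)

end Wreath

section Odometer

variable {G : Type*} [Group G] (Γ : ℕ → Subgroup G) [∀ n, (Γ n).Normal]
  (hdec : ∀ n, Γ (n + 1) ≤ Γ n)

def odoCoord (n : ℕ) : Odo Γ hdec →* G ⧸ Γ n :=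
  (Pi.evalMonoidHom (fun k => G ⧸ Γ k) n).comp (Odo Γ hdec).subtype

theorem continuous_odoCoord (n : ℕ) : Continuous (odoCoord Γ hdec n) :=
  (continuous_apply n).comp continuous_subtype_val

theorem odoCoord_tau_out (n : ℕ) :
    Function.RightInverse (fun a : G ⧸ Γ n => tau Γ hdec a.out) (odoCoord Γ hdec n) :=
  QuotientGroup.out_eq'

theorem odoCoord_eq_of_le {x y : Odo Γ hdec} {k m : ℕ} (hkm : k ≤ m)
    (h : odoCoord Γ hdec m x = odoCoord Γ hdec m y) :
    odoCoord Γ hdec k x = odoCoord Γ hdec k y := by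
  induction m, hkm using Nat.le_induction with
  | base => exact h
  | succ m _ ih =>
    exact ih ((x.2 m).symm.trans ((congrArg (odoMap Γ hdec m) h).trans (y.2 m)))

theorem image_tau_subset_levelKer (n : ℕ) :
    tau Γ hdec '' (Γ n : Set G) ⊆ levelKer Γ hdec n := by
  rintro _ ⟨g, hg, rfl⟩
  exact (QuotientGroup.eq_one_iff g).2 hg

/-- `τ(gₘ)`, with `gₘ` a lift of the level-`(n + m)` coordinate of `z`, agrees with `z` up to
level `n + m`. -/
theorem levelKer_subset_closure_image_tau (n : ℕ) :
    (levelKer Γ hdec n : Set (Odo Γ hdec)) ⊆ closure (tau Γ hdec '' (Γ n : Set G)) := by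
  intro z hz
  let g : ℕ → G := fun m => (odoCoord Γ hdec (n + m) z).out
  have hg : ∀ m, odoCoord Γ hdec (n + m) (tau Γ hdec (g m)) = odoCoord Γ hdec (n + m) z :=
    fun m => QuotientGroup.out_eq' _
  have hmem : ∀ m, g m ∈ Γ n := fun m =>
    (QuotientGroup.eq_one_iff _).1 <|
      (odoCoord_eq_of_le Γ hdec (Nat.le_add_right n m) (hg m)).trans hz
  refine mem_closure_of_tendsto (f := fun m => tau Γ hdec (g m)) (b := Filter.atTop) ?_
    (Filter.Eventually.of_forall fun m => ⟨g m, hmem m, rfl⟩)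
  rw [tendsto_subtype_rng, tendsto_pi_nhds]
  intro k
  apply tendsto_nhds_of_eventually_eq
  filter_upwards [Filter.eventually_ge_atTop k] with m hm
  exact odoCoord_eq_of_le Γ hdec (hm.trans (Nat.le_add_left m n)) (hg m)

end Odometer

theorem stmt15_general {G : Type*} [Group G] (Γ : ℕ → Subgroup G) [∀ n, (Γ n).Normal]
    (hdec : ∀ n, Γ (n + 1) ≤ Γ n) (n : ℕ) :
    (∀ f : ↥(Odo Γ hdec) ≃ₜ ↥(Odo Γ hdec),
        IsAutLOn ↥(Odo Γ hdec) (tau Γ hdec '' ((Γ n : Subgroup G) : Set G)) f ↔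
          ∀ a : G ⧸ Γ n, ∃ ξ : ↥(Odo Γ hdec),
            ∀ x : ↥(Odo Γ hdec), (x : ∀ k, G ⧸ Γ k) n = a → f x = x * ξ⁻¹) ∧
    ∃ φ : Equiv.Perm (G ⧸ Γ n) →* MulAut ((G ⧸ Γ n) → ↥(levelKer Γ hdec n)),
      Nonempty (↥(AutLgrp ↥(Odo Γ hdec) (tau Γ hdec '' ((Γ n : Subgroup G) : Set G))) ≃*
        (((G ⧸ Γ n) → ↥(levelKer Γ hdec n)) ⋊[φ] Equiv.Perm (G ⧸ Γ n))) := by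
  have hAut : ∀ f, IsAutLOn _ (tau Γ hdec '' (Γ n : Set G)) f ↔
      IsAutLOn _ (levelKer Γ hdec n) f :=
    isAutLOn_iff_of_subset_closure (image_tau_subset_levelKer Γ hdec n)
      (levelKer_subset_closure_image_tau Γ hdec n)
  refine ⟨fun f => (hAut f).trans (isAutLOn_ker_iff (odoCoord Γ hdec n) f), mulAutArrow,
    ⟨?_⟩⟩
  exact (MulEquiv.subgroupCongr (SetLike.ext hAut)).trans
    (autKerEquivSemidirect (odoCoord_tau_out Γ hdec n) (continuous_odoCoord Γ hdec n))

/-- `Aut(X,Γₙ)_L = [[X]]_{n,R}`, and it is isomorphic to a semidirect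
product `Xₙ^(G/Γₙ) ⋊ Sym(G/Γₙ)`. -/
theorem stmt15 {G : Type*} [Group G] (Γ : ℕ → Subgroup G) [∀ n, (Γ n).Normal]
    [∀ n, (Γ n).FiniteIndex] (hdec : ∀ n, Γ (n + 1) ≤ Γ n)
    (htriv : ∀ g : G, (∀ n, g ∈ Γ n) → g = 1) [Infinite G] (n : ℕ) :
    (∀ f : ↥(Odo Γ hdec) ≃ₜ ↥(Odo Γ hdec),
        IsAutLOn ↥(Odo Γ hdec) (tau Γ hdec '' ((Γ n : Subgroup G) : Set G)) f ↔
          ∀ a : G ⧸ Γ n, ∃ ξ : ↥(Odo Γ hdec),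
            ∀ x : ↥(Odo Γ hdec), (x : ∀ k, G ⧸ Γ k) n = a → f x = x * ξ⁻¹) ∧
    ∃ φ : Equiv.Perm (G ⧸ Γ n) →* MulAut ((G ⧸ Γ n) → ↥(levelKer Γ hdec n)),
      Nonempty (↥(AutLgrp ↥(Odo Γ hdec) (tau Γ hdec '' ((Γ n : Subgroup G) : Set G))) ≃*
        (((G ⧸ Γ n) → ↥(levelKer Γ hdec n)) ⋊[φ] Equiv.Perm (G ⧸ Γ n))) :=
  stmt15_general Γ hdec n

end OdoPaper
end
end
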